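/- There exists a partition of [0,1] into continuum many pairwise disjoint nonempty sets, each of which has Lebesgue outer measure 1. That is, there exists a family (A_α)_{α ∈ I} of pairwise disjoint subsets of [0,1] indexed by a set I of cardinality of the continuum, whose union is [0,1], with λ*(A_α) = 1 for every α. -/

import Mathlib

/-!
Bernstein's construction. There are only continuum many closed sets, while every closed set of
positive measure is uncountable and hence has continuum many points. Enumerate all pairs
(label, closed set of positive measure in `[0,1]`) in order type `𝔠` and pick, by transfinite
recursion, a fresh point of the closed set for each pair; the points carrying a given label form
a set meeting every closed set of positive measure, so its measurable hull has full measure in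
`[0,1]` by inner regularity. Leftover points of `[0,1]` are thrown into one of the classes.
-/

open MeasureTheory Set Cardinal Function

universe u

theorem mk_setOf_isClosed_le_continuum {α : Type u} [TopologicalSpace α]
    [SecondCountableTopology α] : #{K : Set α | IsClosed K} ≤ 𝔠 := by
  obtain ⟨b, hbc, -, hb⟩ := TopologicalSpace.exists_countable_basis α
  have hinj : Function.Injective
      fun K : {K : Set α | IsClosed K} => {U : b | Disjoint (U : Set α) K} := by
    intro K L hKL
    have hcompl (C : {K : Set α | IsClosed K}) :
        (C : Set α)ᶜ = ⋃₀ {U ∈ b | Disjoint U (C : Set α)} := by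
      simp only [← subset_compl_iff_disjoint_right]
      exact hb.open_eq_sUnion' C.2.isOpen_compl
    have hdisj (U : Set α) (hU : U ∈ b) : Disjoint U K ↔ Disjoint U L := by
      simpa using congrArg (⟨U, hU⟩ ∈ ·) hKL
    refine Subtype.ext (compl_inj_iff.1 ?_)
    rw [hcompl K, hcompl L]
    congr 1
    ext U
    exact and_congr_right (hdisj U)
  calc #{K : Set α | IsClosed K} ≤ #(Set b) := mk_le_of_injective hinj
    _ = 2 ^ #b := mk_set
    _ ≤ 2 ^ ℵ₀ := power_le_power_left two_ne_zero (mk_le_aleph0_iff.2 hbc.to_subtype)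
    _ = 𝔠 := two_power_aleph0

theorem IsClosed.continuum_le_mk {α : Type u} [TopologicalSpace α] [PolishSpace α] {C : Set α}
    (hC : IsClosed C) (hC' : ¬C.Countable) : 𝔠 ≤ #C := by
  obtain ⟨f, hfC, -, hf⟩ := hC.exists_nat_bool_injection_of_not_countable hC'
  have := lift_mk_le_lift_mk_of_injective (β := C) (f := fun x => ⟨f x, hfC ⟨x, rfl⟩⟩)
    (fun x y h => hf (congrArg Subtype.val h))
  simpa [two_power_aleph0] using this

section TransfiniteSelection

variable {ι α : Type u} [LinearOrder ι] [WellFoundedLT ι] (S : ι → Set α)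

noncomputable def injectiveSelection (hS : ∀ i, #(Iio i) < #(S i)) : ι → α :=
  IsWellFounded.fix (· < ·) fun i g =>
    (sdiff_nonempty_of_mk_lt_mk <|
      (mk_range_le (f := fun j : Iio i => g j j.2)).trans_lt (hS i)).some

theorem injectiveSelection_mem_sdiff (hS : ∀ i, #(Iio i) < #(S i)) (i : ι) :
    injectiveSelection S hS i ∈
      S i \ range fun j : Iio i => injectiveSelection S hS j := by
  rw [injectiveSelection, IsWellFounded.fix_eq]
  exact Nonempty.some_mem _

theorem exists_injective_forall_mem (hS : ∀ i, #(Iio i) < #(S i)) :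
    ∃ f : ι → α, Function.Injective f ∧ ∀ i, f i ∈ S i := by
  refine ⟨injectiveSelection S hS, fun i j hij => ?_,
    fun i => (injectiveSelection_mem_sdiff S hS i).1⟩
  by_contra hne
  rcases lt_or_gt_of_ne hne with h | h
  · exact (injectiveSelection_mem_sdiff S hS j).2 ⟨⟨i, h⟩, hij⟩
  · exact (injectiveSelection_mem_sdiff S hS i).2 ⟨⟨j, h⟩, hij.symm⟩

end TransfiniteSelection

theorem exists_partition_of_pairwise_disjoint {ι α : Type*} {A : ι → Set α} {X : Set α}
    (i₀ : ι) (hA : Pairwise (Disjoint on A)) (hAX : ∀ i, A i ⊆ X) :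
    ∃ B : ι → Set α, (∀ i, A i ⊆ B i) ∧ Pairwise (Disjoint on B) ∧ ⋃ i, B i = X := by
  classical
  set R := X \ ⋃ i, A i
  refine ⟨fun i => if i = i₀ then A i ∪ R else A i, fun i => ?_, fun i j hij => ?_, ?_⟩
  · dsimp only
    split_ifs
    exacts [subset_union_left, subset_rfl]
  · have hR (k : ι) : Disjoint (A k) R := disjoint_sdiff_right.mono_left (subset_iUnion A k)
    dsimp only [onFun]
    split_ifs with hi hj hj
    · exact absurd (hi.trans hj.symm) hij
    · exact disjoint_union_left.2 ⟨hA hij, (hR j).symm⟩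
    · exact disjoint_union_right.2 ⟨hA hij, hR i⟩
    · exact hA hij
  · refine (iUnion_subset fun i => ?_).antisymm fun x hx => ?_
    · split_ifs
      exacts [union_subset (hAX i) sdiff_subset, hAX i]
    · by_cases hxA : x ∈ ⋃ i, A i
      · obtain ⟨i, hi⟩ := mem_iUnion.1 hxA
        exact mem_iUnion.2 ⟨i, by split_ifs <;> simp [hi]⟩
      · exact mem_iUnion.2 ⟨i₀, by simp [R, hx, hxA]⟩

theorem exists_pairwise_disjoint_forall_inter_nonempty {α : Type u} (𝒦 : Set (Set α))
    (h𝒦 : 𝒦.Nonempty) {κ : Cardinal.{u}} (hκ : ℵ₀ ≤ κ) (h𝒦κ : #𝒦 ≤ κ) (hK : ∀ K ∈ 𝒦, κ ≤ #K) :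
    ∃ (ι : Type u) (A : ι → Set α), #ι = κ ∧ Pairwise (Disjoint on A) ∧
      (∀ i, A i ⊆ ⋃₀ 𝒦) ∧ ∀ i, ∀ K ∈ 𝒦, (A i ∩ K).Nonempty := by
  let ι := κ.ord.ToType
  have : Nonempty 𝒦 := h𝒦.to_subtype
  have hι : #ι = κ := mk_ord_toType κ
  obtain ⟨e⟩ : Nonempty (ι ≃ ι × 𝒦) := by
    rw [← Cardinal.eq, mk_prod, lift_id, lift_id, hι, mul_eq_left hκ h𝒦κ (mk_ne_zero _)]
  obtain ⟨f, hf, hfS⟩ := exists_injective_forall_mem (fun ξ => ((e ξ).2 : Set α))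
    fun ξ => (mk_Iio_lt ξ (by simp [ι])).trans_le (hι ▸ hK _ (e ξ).2.2)
  refine ⟨ι, fun i => f '' {ξ | (e ξ).1 = i}, hι, fun i j hij => ?_, fun i => ?_, fun i K hK => ?_⟩
  · exact disjoint_image_of_injective hf (disjoint_left.2 fun ξ hi hj => hij (hi.symm.trans hj))
  · rintro _ ⟨ξ, -, rfl⟩
    exact mem_sUnion_of_mem (hfS ξ) (e ξ).2.2
  · refine ⟨f (e.symm (i, ⟨K, hK⟩)), mem_image_of_mem f ?_, ?_⟩
    · simp
    · simpa using hfS (e.symm (i, ⟨K, hK⟩))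

theorem exists_partition_forall_inter_nonempty {α : Type u} {X : Set α} (𝒦 : Set (Set α))
    (h𝒦 : 𝒦.Nonempty) {κ : Cardinal.{u}} (hκ : ℵ₀ ≤ κ) (h𝒦κ : #𝒦 ≤ κ)
    (hK : ∀ K ∈ 𝒦, K ⊆ X ∧ κ ≤ #K) :
    ∃ (ι : Type u) (A : ι → Set α), #ι = κ ∧ Pairwise (Disjoint on A) ∧ (⋃ i, A i) = X ∧
      ∀ i, ∀ K ∈ 𝒦, (A i ∩ K).Nonempty := by
  obtain ⟨ι, A, hι, hA, hAX, hAK⟩ := exists_pairwise_disjoint_forall_inter_nonempty 𝒦 h𝒦 hκ h𝒦κ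
    fun K hK' => (hK K hK').2
  have : Nonempty ι := by
    rw [← mk_ne_zero_iff, hι]
    exact (aleph0_pos.trans_le hκ).ne'
  obtain ⟨B, hAB, hB, hBX⟩ := exists_partition_of_pairwise_disjoint (Classical.arbitrary ι) hA
    fun i => (hAX i).trans (sUnion_subset fun K hK' => (hK K hK').1)
  exact ⟨ι, B, hι, hB, hBX, fun i K hK' => (hAK i K hK').mono (inter_subset_inter_left K (hAB i))⟩

theorem measure_eq_of_forall_isCompact_inter_nonempty {α : Type*} [TopologicalSpace α]
    [MeasurableSpace α] {μ : Measure α} [μ.InnerRegular] {A X : Set α} (hX : MeasurableSet X)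
    (hAX : A ⊆ X) (hA : ∀ K ⊆ X, IsCompact K → 0 < μ K → (A ∩ K).Nonempty) : μ A = μ X := by
  set T := toMeasurable μ A
  have hnull : μ (X \ T) = 0 := by
    by_contra h
    obtain ⟨K, hKT, hK, hμK⟩ :=
      (hX.diff (measurableSet_toMeasurable μ A)).exists_lt_isCompact (pos_iff_ne_zero.2 h)
    obtain ⟨x, hxA, hxK⟩ := hA K (hKT.trans sdiff_subset) hK hμK
    exact (hKT hxK).2 (subset_toMeasurable μ A hxA)
  refine (measure_mono hAX).antisymm ?_
  calc μ X = μ (X ∩ T) + μ (X \ T) :=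
        (measure_inter_add_sdiff X (measurableSet_toMeasurable μ A)).symm
    _ ≤ μ T := by rw [hnull, add_zero]; exact measure_mono inter_subset_right
    _ = μ A := measure_toMeasurable A

/-- There is a partition of `[0,1]` into continuum many pairwise disjoint
nonempty sets, each of Lebesgue outer measure `1`.
(The outer measure of an arbitrary set is its `volume` in Mathlib.) -/
theorem stmt_9 :
    ∃ (I : Type) (A : I → Set ℝ),
      Cardinal.mk I = Cardinal.continuum ∧
      (∀ α, (A α).Nonempty) ∧
      (∀ α β, α ≠ β → Disjoint (A α) (A β)) ∧
      (⋃ α, A α) = Set.Icc 0 1 ∧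
      (∀ α, volume (A α) = 1) := by
  let 𝒦 : Set (Set ℝ) := {K | IsClosed K ∧ K ⊆ Icc 0 1 ∧ 0 < volume K}
  have hIcc : Icc (0 : ℝ) 1 ∈ 𝒦 := ⟨isClosed_Icc, subset_rfl, by simp⟩
  have h𝒦 : #𝒦 ≤ 𝔠 := (mk_le_mk_of_subset fun K hK => hK.1).trans mk_setOf_isClosed_le_continuum
  have hK (K : Set ℝ) (hK𝒦 : K ∈ 𝒦) : K ⊆ Icc 0 1 ∧ 𝔠 ≤ #K :=
    ⟨hK𝒦.2.1, hK𝒦.1.continuum_le_mk fun hc => (hc.measure_zero volume).not_gt hK𝒦.2.2⟩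
  obtain ⟨I, A, hI, hA, hAX, hAK⟩ :=
    exists_partition_forall_inter_nonempty 𝒦 ⟨_, hIcc⟩ aleph0_le_continuum h𝒦 hK
  refine ⟨I, A, hI, fun α => (hAK α _ hIcc).mono inter_subset_left, fun α β h => hA h, hAX,
    fun α => ?_⟩
  have hvol := measure_eq_of_forall_isCompact_inter_nonempty (μ := volume) measurableSet_Icc
    (hAX ▸ subset_iUnion A α) fun K hKX hK hμK => hAK α K ⟨hK.isClosed, hKX, hμK⟩
  simpa using hvol
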